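/- Let G be a (2K_2, K_3+K_1)-free graph with a distinguished induced 5-cycle structure: vertex sets A_1,...,A_5 as before (A_i complete to A_{i±1}, anticomplete to A_{i±2}, with v_i ∈ A_i), and for i mod 5 let B_i be the set of vertices outside A that have a neighbor in each of A_i, A_{i-2}, A_{i+2} and are anticomplete to A_{i-1} ∪ A_{i+1}. Then every vertex of B_i is complete to A_i. -/

import Mathlib

open SimpleGraph

def K3K1 : SimpleGraph (Fin 4) :=
  SimpleGraph.fromEdgeSet {s(0, 1), s(0, 2), s(1, 2)}

namespace K3K1

variable {V : Type*} {G : SimpleGraph V} {u v w z : V}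

def embeddingOfTriangle (huv : G.Adj u v) (huw : G.Adj u w) (hvw : G.Adj v w)
    (hzu : ¬ G.Adj z u) (hzv : ¬ G.Adj z v) (hzw : ¬ G.Adj z w) : K3K1 ↪g G where
  toFun := ![u, v, w, z]
  inj' := by
    have hu : z ≠ u := fun h => hzv (h ▸ huv)
    have hv : z ≠ v := fun h => hzu (h ▸ huv.symm)
    have hw : z ≠ w := fun h => hzu (h ▸ huw.symm)
    intro p q hpq
    fin_cases p <;> fin_cases q <;> simp_all [huv.ne, huw.ne, hvw.ne, huv.ne', huw.ne', hvw.ne']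
  map_rel_iff' := by
    intro p q
    change G.Adj (![u, v, w, z] p) (![u, v, w, z] q) ↔ K3K1.Adj p q
    fin_cases p <;> fin_cases q <;>
      simp [K3K1, huv, huw, hvw, huv.symm, huw.symm, hvw.symm, hzu, hzv, hzw, G.adj_comm _ z]

theorem exists_adj_of_isEmpty_embedding (hfree : IsEmpty (K3K1 ↪g G))
    (huv : G.Adj u v) (huw : G.Adj u w) (hvw : G.Adj v w) (z : V) :
    G.Adj z u ∨ G.Adj z v ∨ G.Adj z w := by
  by_contra! h
  exact hfree.false (embeddingOfTriangle huv huw hvw h.1 h.2.1 h.2.2)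

end K3K1

theorem stmt18_general {V : Type*} (G : SimpleGraph V)
    (hfree : IsEmpty (K3K1 ↪g G))
    (A : Fin 5 → Set V)
    (hcomp : ∀ i : Fin 5, ∀ a ∈ A i, ∀ b ∈ A (i + 1), G.Adj a b)
    (hanti : ∀ i : Fin 5, ∀ a ∈ A i, ∀ b ∈ A (i + 2), ¬ G.Adj a b)
    (i : Fin 5) (x : V)
    (hxp : ∃ a ∈ A (i + 2), G.Adj x a)
    (hxm : ∃ a ∈ A (i - 2), G.Adj x a) :
    ∀ a ∈ A i, G.Adj x a := by
  intro a ha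
  obtain ⟨b, hb, hxb⟩ := hxp
  obtain ⟨c, hc, hxc⟩ := hxm
  have hbc : G.Adj b c := hcomp (i + 2) b hb c (by rwa [show i + 2 + 1 = i - 2 by grind])
  have hab : ¬ G.Adj a b := hanti i a ha b hb
  have hca : ¬ G.Adj c a := hanti (i - 2) c hc a (by rwa [sub_add_cancel])
  obtain h | h | h := K3K1.exists_adj_of_isEmpty_embedding hfree hxb hxc hbc a
  · exact h.symm
  · exact absurd h hab
  · exact absurd h.symm hca

/-- In a K_3+K_1-free graph with a 5-cycle blow-up structure `A 0, …, A 4`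
(each `A i` complete to `A (i±1)` and anticomplete to `A (i±2)`), every vertex `x`
outside `A` that has a neighbor in each of `A i`, `A (i+2)`, `A (i-2)` and is
anticomplete to `A (i+1) ∪ A (i-1)` is complete to `A i`. -/
theorem stmt18 {V : Type*} (G : SimpleGraph V)
    (hfree : IsEmpty (K3K1 ↪g G))
    (A : Fin 5 → Set V)
    (hcomp : ∀ i : Fin 5, ∀ a ∈ A i, ∀ b ∈ A (i + 1), G.Adj a b)
    (hanti : ∀ i : Fin 5, ∀ a ∈ A i, ∀ b ∈ A (i + 2), ¬ G.Adj a b)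
    (i : Fin 5) (x : V) (hx : ∀ j, x ∉ A j)
    (hxi : ∃ a ∈ A i, G.Adj x a)
    (hxp : ∃ a ∈ A (i + 2), G.Adj x a)
    (hxm : ∃ a ∈ A (i - 2), G.Adj x a)
    (hxanti : ∀ a, a ∈ A (i + 1) ∪ A (i - 1) → ¬ G.Adj x a) :
    ∀ a ∈ A i, G.Adj x a :=
  stmt18_general G hfree A hcomp hanti i x hxp hxm
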